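/- arXiv:2303.11768 — 7 statements merged into one kernel-verified Lean document; each statement's English description precedes it below -/
import Mathlib

section
/- Let X be a Hausdorff topological space. Then X has the Hurewicz property if and only if player One does not have a winning strategy in the Hurewicz game on X. -/
open Set TopologicalSpace

universe u

/-- A non-trivial open cover: a family of nonempty proper open sets covering `X`. -/
def NTOpenCover (X : Type u) [TopologicalSpace X] (𝒰 : Set (Set X)) : Prop :=
  (∀ U ∈ 𝒰, IsOpen U ∧ U.Nonempty ∧ U ≠ Set.univ) ∧ ⋃₀ 𝒰 = Set.univ

/-- `𝒪_X`, the collection of non-trivial open covers of `X`. -/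
def OX (X : Type u) [TopologicalSpace X] : Set (Set (Set X)) := {𝒰 | NTOpenCover X 𝒰}

/-- The Hurewicz property. -/
def HurewiczProp (X : Type u) [TopologicalSpace X] : Prop :=
  ∀ 𝒰 : ℕ → Set (Set X), (∀ n, 𝒰 n ∈ OX X) →
    ∃ ℱ : ℕ → Set (Set X), (∀ n, ℱ n ⊆ 𝒰 n ∧ (ℱ n).Finite) ∧
      ∀ x : X, ∃ m : ℕ, ∀ n ≥ m, x ∈ ⋃₀ ℱ n

/-- The selection principle `S_fin(𝒜, ℬ)`. -/
def Sfin {α : Type u} (𝒜 ℬ : Set (Set α)) : Prop :=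
  ∀ 𝒰 : ℕ → Set α, (∀ n, 𝒰 n ∈ 𝒜) →
    ∃ ℱ : ℕ → Set α, (∀ n, ℱ n ⊆ 𝒰 n ∧ (ℱ n).Finite) ∧ (⋃ n, ℱ n) ∈ ℬ

/-- The selection principle `S_1(𝒜, ℬ)`. -/
def Sone {α : Type u} (𝒜 ℬ : Set (Set α)) : Prop :=
  ∀ 𝒰 : ℕ → Set α, (∀ n, 𝒰 n ∈ 𝒜) →
    ∃ f : ℕ → α, (∀ n, f n ∈ 𝒰 n) ∧ Set.range f ∈ ℬ

/-- A member `C` of a collection `ℭ` is groupable if there is a finite-to-one map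
`φ : C → ℕ` such that for every infinite `J ⊆ ℕ`, `⋃ {φ⁻¹(n) : n ∈ J} ∈ ℭ`. -/
def Groupable {α : Type u} (ℭ : Set (Set α)) (C : Set α) : Prop :=
  ∃ φ : α → ℕ, (∀ n : ℕ, {x ∈ C | φ x = n}.Finite) ∧
    ∀ J : Set ℕ, J.Infinite → {x ∈ C | φ x ∈ J} ∈ ℭ

/-- `ℭ^gp`, the collection of groupable members of `ℭ`. -/
def groupables {α : Type u} (ℭ : Set (Set α)) : Set (Set α) :=
  {C | C ∈ ℭ ∧ Groupable ℭ C}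

/-- The Menger property. -/
def MengerProp (X : Type u) [TopologicalSpace X] : Prop := Sfin (OX X) (OX X)

/-- The Rothberger property. -/
def RothbergerProp (X : Type u) [TopologicalSpace X] : Prop := Sone (OX X) (OX X)

/-- The Gerlits-Nagy property: Hurewicz and Rothberger. -/
def GerlitsNagyProp (X : Type u) [TopologicalSpace X] : Prop :=
  HurewiczProp X ∧ RothbergerProp X

/-- `𝒪_X(𝒜)`, the collection of `𝒜`-covers of `X`. -/
def ACovers (X : Type u) [TopologicalSpace X] (𝒜 : Set (Set X)) : Set (Set (Set X)) :=
  {𝒰 | 𝒰 ∈ OX X ∧ ∀ A ∈ 𝒜, ∃ U ∈ 𝒰, A ⊆ U}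

/-- `𝒦_X`, the collection of `k`-covers of `X`. -/
def KCovers (X : Type u) [TopologicalSpace X] : Set (Set (Set X)) :=
  {𝒰 | 𝒰 ∈ OX X ∧ ∀ K : Set X, IsCompact K → K.Nonempty → ∃ U ∈ 𝒰, K ⊆ U}

/-- `Ω_X`, the collection of `ω`-covers of `X`. -/
def OmegaCovers (X : Type u) [TopologicalSpace X] : Set (Set (Set X)) :=
  {𝒰 | 𝒰 ∈ OX X ∧ ∀ F : Set X, F.Finite → F.Nonempty → ∃ U ∈ 𝒰, F ⊆ U}

/-- An ideal of closed sets of `X`. -/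
def IdealOfClosedSets (X : Type u) [TopologicalSpace X] (𝒜 : Set (Set X)) : Prop :=
  (∀ A ∈ 𝒜, IsClosed A ∧ A.Nonempty ∧ A ≠ Set.univ) ∧
  (∀ F : Set X, F.Finite → F.Nonempty → F ∈ 𝒜) ∧
  (∀ A B : Set X, A ∈ 𝒜 → B ∈ 𝒜 → A ∪ B ≠ Set.univ → A ∪ B ∈ 𝒜) ∧
  (∀ A ∈ 𝒜, ∀ B : Set X, B ⊆ A → IsClosed B → B.Nonempty → B ∈ 𝒜)

/-- One has a winning strategy in the Hurewicz game on `X`. -/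
def OneWinsHurewicz (X : Type u) [TopologicalSpace X] : Prop :=
  ∃ σ : List (Set (Set X)) → Set (Set X), (∀ s, σ s ∈ OX X) ∧
    ∀ F : ℕ → Set (Set X),
      (∀ n, (F n).Finite ∧ F n ⊆ σ (List.ofFn fun i : Fin n => F i)) →
        ∃ x : X, ∀ m : ℕ, ∃ n ≥ m, x ∉ ⋃₀ F n

/-- One has a winning strategy in `G_fin(𝒜, ℬ)`. -/
def OneWinsGfin {α : Type u} (𝒜 ℬ : Set (Set α)) : Prop :=
  ∃ σ : List (Set α) → Set α, (∀ s, σ s ∈ 𝒜) ∧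
    ∀ F : ℕ → Set α,
      (∀ n, (F n).Finite ∧ F n ⊆ σ (List.ofFn fun i : Fin n => F i)) →
        (⋃ n, F n) ∉ ℬ

/-- One has a winning predetermined strategy in `G_fin(𝒜, ℬ)`. -/
def OneWinsPreGfin {α : Type u} (𝒜 ℬ : Set (Set α)) : Prop :=
  ∃ σ : ℕ → Set α, (∀ n, σ n ∈ 𝒜) ∧
    ∀ F : ℕ → Set α, (∀ n, (F n).Finite ∧ F n ⊆ σ n) → (⋃ n, F n) ∉ ℬ

/-- One has a winning strategy in `G_1(𝒜, ℬ)`. -/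
def OneWinsGone {α : Type u} (𝒜 ℬ : Set (Set α)) : Prop :=
  ∃ σ : List α → Set α, (∀ s, σ s ∈ 𝒜) ∧
    ∀ f : ℕ → α, (∀ n, f n ∈ σ (List.ofFn fun i : Fin n => f i)) → Set.range f ∉ ℬ

/-- One has a winning predetermined strategy in `G_1(𝒜, ℬ)`. -/
def OneWinsPreGone {α : Type u} (𝒜 ℬ : Set (Set α)) : Prop :=
  ∃ σ : ℕ → Set α, (∀ n, σ n ∈ 𝒜) ∧
    ∀ f : ℕ → α, (∀ n, f n ∈ σ n) → Set.range f ∉ ℬ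

/-- The collection `𝒜` of subsets of `X`, viewed as a hyperspace with the Vietoris topology. -/
def Hyper (X : Type u) (𝒜 : Set (Set X)) : Type u := {K : Set X // K ∈ 𝒜}

/-- The Vietoris topology on `Hyper X 𝒜`. -/
instance Hyper.topologicalSpace (X : Type u) [TopologicalSpace X] (𝒜 : Set (Set X)) :
    TopologicalSpace (Hyper X 𝒜) :=
  TopologicalSpace.generateFrom
    {S | ∃ U : Set X, IsOpen U ∧
      (S = {K : Hyper X 𝒜 | K.1 ⊆ U} ∨ S = {K : Hyper X 𝒜 | (K.1 ∩ U).Nonempty})}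

/-- `𝕂(X)`: the nonempty compact subsets of `X` with the Vietoris topology. -/
abbrev HyperK (X : Type u) [TopologicalSpace X] : Type u :=
  Hyper X {K : Set X | IsCompact K ∧ K.Nonempty}

/-- `𝒫_fin(X)`: the nonempty finite subsets of `X` with the Vietoris topology. -/
abbrev PFin (X : Type u) : Type u :=
  Hyper X {F : Set X | F.Finite ∧ F.Nonempty}

/-- `C_p(X)`: continuous real-valued functions with the topology of pointwise convergence
(the subspace topology from the product topology on `X → ℝ`). -/
abbrev Cp (X : Type u) [TopologicalSpace X] : Type u := {f : X → ℝ // Continuous f}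

/-- `C_k(X)`: continuous real-valued functions with the compact-open topology. -/
def Ck (X : Type u) [TopologicalSpace X] : Type u := {f : X → ℝ // Continuous f}

instance Ck.topologicalSpace (X : Type u) [TopologicalSpace X] : TopologicalSpace (Ck X) :=
  TopologicalSpace.generateFrom
    {S | ∃ (K : Set X) (U : Set ℝ), IsCompact K ∧ IsOpen U ∧
      S = {f : Ck X | ∀ x ∈ K, f.1 x ∈ U}}

/-- The constantly zero function in `C_p(X)`. -/
def zeroCp (X : Type u) [TopologicalSpace X] : Cp X := ⟨fun _ => (0 : ℝ), continuous_const⟩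

/-- The constantly zero function in `C_k(X)`. -/
def zeroCk (X : Type u) [TopologicalSpace X] : Ck X := ⟨fun _ => (0 : ℝ), continuous_const⟩

/-- `Ω_{Y,y}`: the sets having `y` in their closure but not containing `y`. -/
def OmegaPt (Y : Type u) [TopologicalSpace Y] (y : Y) : Set (Set Y) :=
  {A | y ∈ closure A ∧ y ∉ A}

/-- Countable fan-tightness. -/
def CountableFanTightness (Y : Type u) [TopologicalSpace Y] : Prop :=
  ∀ y : Y, Sfin (OmegaPt Y y) (OmegaPt Y y)

/-- Countable strong fan-tightness. -/
def CountableStrongFanTightness (Y : Type u) [TopologicalSpace Y] : Prop :=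
  ∀ y : Y, Sone (OmegaPt Y y) (OmegaPt Y y)

/-- The Reznichenko property: every countable member of `Ω_{Y,y}` is groupable. -/
def Reznichenko (Y : Type u) [TopologicalSpace Y] : Prop :=
  ∀ y : Y, ∀ A ∈ OmegaPt Y y, A.Countable → Groupable (OmegaPt Y y) A


/-!
A Hurewicz space is Lindelöf for non-trivial covers, so we may let Two answer a cover only by
initial segments of a fixed enumeration of a countable subcover. The tree of plays against a
strategy of One is then indexed by `List ℕ`, hence countable, and a single application of the
Hurewicz property to the covers at all of its nodes selects at each node a finite set, contained
in some initial segment. Two's play along the branch that answers with these segments covers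
every point from some inning on, because the nodes of a branch are pairwise distinct.
Conversely, covers witnessing the failure of the Hurewicz property form a winning strategy for
One that ignores Two's moves.
-/

open Filter

lemma Set.Finite.exists_subset_image_Iic {α : Type*} {f : ℕ → α} {S : Set α} (hS : S.Finite)
    (hSf : S ⊆ range f) : ∃ k, S ⊆ f '' Iic k := by
  induction S, hS using Set.Finite.induction_on with
  | empty => exact ⟨0, empty_subset _⟩
  | @insert a S _ _ ih =>
    obtain ⟨j, rfl⟩ := hSf (mem_insert _ _)
    obtain ⟨k, hk⟩ := ih ((subset_insert _ _).trans hSf)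
    exact ⟨max j k, insert_subset (mem_image_of_mem _ (le_max_left j k))
      (hk.trans (image_mono (Iic_subset_Iic.2 (le_max_right j k))))⟩

namespace GameTree

variable {α : Type*} (move : List α → ℕ → α)

/-- The history of moves determined by a node of the tree; the node lists the indices of the
moves chosen, most recent first. -/
def history : List ℕ → List α
  | [] => []
  | k :: r => history r ++ [move (history r) k]

def branch (κ : List ℕ → ℕ) : ℕ → List ℕ
  | 0 => []
  | n + 1 => κ (branch κ n) :: branch κ n

lemma length_branch (κ : List ℕ → ℕ) (n : ℕ) : (branch κ n).length = n := by
  induction n with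
  | zero => rfl
  | succ n ih => simp [branch, ih]

lemma branch_injective (κ : List ℕ → ℕ) : Function.Injective (branch κ) := fun m n hmn => by
  simpa only [length_branch] using congrArg List.length hmn

def play (κ : List ℕ → ℕ) (n : ℕ) : α :=
  move (history move (branch κ n)) (κ (branch κ n))

lemma ofFn_play (κ : List ℕ → ℕ) (n : ℕ) :
    List.ofFn (fun i : Fin n => play move κ i) = history move (branch κ n) := by
  induction n with
  | zero => rfl
  | succ n ih =>
    simp only [List.ofFn_succ', List.concat_eq_append, Fin.val_castSucc, ih]
    rfl

end GameTree

section Hurewicz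

variable {X : Type u} [TopologicalSpace X]

lemma mem_OX_of_subset {𝒰 𝒱 : Set (Set X)} (h𝒰 : 𝒰 ∈ OX X) (h𝒱𝒰 : 𝒱 ⊆ 𝒰)
    (h𝒱 : ⋃₀ 𝒱 = univ) : 𝒱 ∈ OX X :=
  ⟨fun U hU => h𝒰.1 U (h𝒱𝒰 hU), h𝒱⟩

lemma HurewiczProp.exists_seq_subcover [Nonempty X] (h : HurewiczProp X) {𝒰 : Set (Set X)}
    (h𝒰 : 𝒰 ∈ OX X) : ∃ e : ℕ → Set X, range e ⊆ 𝒰 ∧ range e ∈ OX X := by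
  obtain ⟨ℱ, hℱ, hcov⟩ := h (fun _ => 𝒰) (fun _ => h𝒰)
  have hcover : ⋃₀ (⋃ n, ℱ n) = univ := eq_univ_of_forall fun x => by
    obtain ⟨m, hm⟩ := hcov x
    obtain ⟨U, hU, hxU⟩ := hm m le_rfl
    exact ⟨U, mem_iUnion.2 ⟨m, hU⟩, hxU⟩
  have hne : (⋃ n, ℱ n).Nonempty := by
    by_contra hempty
    rw [not_nonempty_iff_eq_empty.1 hempty, sUnion_empty] at hcover
    exact empty_ne_univ hcover
  obtain ⟨e, he⟩ := (countable_iUnion fun n => (hℱ n).2.countable).exists_eq_range hne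
  have hsub : range e ⊆ 𝒰 := he ▸ iUnion_subset fun n => (hℱ n).1
  exact ⟨e, hsub, mem_OX_of_subset h𝒰 hsub (he ▸ hcover)⟩

lemma HurewiczProp.exists_eventually_mem {ι : Type*} [Countable ι] [Infinite ι]
    (h : HurewiczProp X) (𝒰 : ι → Set (Set X)) (h𝒰 : ∀ i, 𝒰 i ∈ OX X) :
    ∃ ℱ : ι → Set (Set X), (∀ i, ℱ i ⊆ 𝒰 i ∧ (ℱ i).Finite) ∧
      ∀ x, ∀ᶠ i in cofinite, x ∈ ⋃₀ ℱ i := by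
  obtain ⟨φ⟩ := nonempty_equiv_of_countable (α := ι) (β := ℕ)
  obtain ⟨ℱ, hℱ, hcov⟩ := h (𝒰 ∘ φ.symm) fun n => h𝒰 _
  refine ⟨ℱ ∘ φ, fun i => by simpa using hℱ (φ i), fun x => ?_⟩
  have hx : ∀ᶠ n in cofinite, x ∈ ⋃₀ ℱ n := by
    rw [Nat.cofinite_eq_atTop]
    exact eventually_atTop.2 (hcov x)
  exact φ.injective.tendsto_cofinite.eventually hx

open GameTree in
theorem HurewiczProp.not_oneWinsHurewicz (h : HurewiczProp X) : ¬ OneWinsHurewicz X := by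
  rintro ⟨σ, hσ, hwin⟩
  -- `σ` beats the empty play, so `X` is nonempty
  obtain ⟨x₀, -⟩ := hwin (fun _ => ∅) fun _ => ⟨finite_empty, empty_subset _⟩
  have : Nonempty X := ⟨x₀⟩
  choose e he using fun s => h.exists_seq_subcover (hσ s)
  let move (s : List (Set (Set X))) (k : ℕ) : Set (Set X) := e s '' Iic k
  obtain ⟨ℱ, hℱ, hcov⟩ :=
    h.exists_eventually_mem (fun r => range (e (history move r))) fun r => (he _).2
  choose κ hκ using fun r => (hℱ r).2.exists_subset_image_Iic (hℱ r).1
  obtain ⟨x, hx⟩ := hwin (play move κ) fun n => by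
    refine ⟨(finite_Iic _).image _, ?_⟩
    rw [ofFn_play]
    exact (image_subset_range _ _).trans (he _).1
  have hcovered : ∀ᶠ n in atTop, x ∈ ⋃₀ ℱ (branch κ n) :=
    Nat.cofinite_eq_atTop ▸ (branch_injective κ).tendsto_cofinite.eventually (hcov x)
  obtain ⟨m, hm⟩ := eventually_atTop.1 hcovered
  obtain ⟨n, hn, hxn⟩ := hx m
  exact hxn (sUnion_mono (hκ _) (hm n hn))

theorem hurewiczProp_of_not_oneWinsHurewicz (h : ¬ OneWinsHurewicz X) : HurewiczProp X := by
  intro 𝒰 h𝒰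
  by_contra hfail
  refine h ⟨fun s => 𝒰 s.length, fun s => h𝒰 _, fun F hF => ?_⟩
  by_contra hTwo
  push Not at hTwo
  exact hfail ⟨F, fun n => ⟨by simpa using (hF n).2, (hF n).1⟩, hTwo⟩

end Hurewicz

theorem statement0_general {X : Type u} [TopologicalSpace X] :
    HurewiczProp X ↔ ¬ OneWinsHurewicz X :=
  ⟨HurewiczProp.not_oneWinsHurewicz, hurewiczProp_of_not_oneWinsHurewicz⟩

theorem statement0 {X : Type u} [TopologicalSpace X] [T2Space X] :
    HurewiczProp X ↔ ¬ OneWinsHurewicz X :=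
  statement0_general
end

section
/- Let X be a Hausdorff space and 𝒜 an ideal of closed sets of X. For any sequence ⟨𝒰_n : n ∈ ℕ⟩ of 𝒜-covers of X each of which is groupable with respect to 𝒪_X(𝒜), there exists a sequence ⟨𝒱_n : n ∈ ℕ⟩ of 𝒜-covers of X, each groupable with respect to 𝒪_X(𝒜), such that 𝒱_n ⊆ 𝒰_n for every n ∈ ℕ and the family {𝒱_n : n ∈ ℕ} is pairwise disjoint. -/
/-!
Fix groupings `φ n` of the covers `𝒰 n`; their blocks `φ n ⁻¹' {j}` are finite. Enumerating the
pairs (row `n`, step) along `Nat.unpair`, pick at each step a block of the current row, with index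
at least the step, disjoint from the finitely many blocks picked before. The blocks picked in
row `n` form a subcover `𝒱 n ⊆ 𝒰 n` indexed by an infinite set `J n`, hence an `𝒜`-cover; it is
still groupable after reindexing `J n` by `ℕ`, and covers from different rows share no blocks.
-/

open Set TopologicalSpace

universe u

theorem exists_seq_of_forall_exists_next {α : Type*} (Q : (t : ℕ) → (Fin t → α) → α → Prop)
    (h : ∀ t g, ∃ a, Q t g a) : ∃ f : ℕ → α, ∀ t, Q t (fun i => f i) (f t) := by
  choose next hnext using h
  let f : ℕ → α := fun t => Nat.strongRec (fun t prev => next t fun i => prev i i.2) t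
  refine ⟨f, fun t => ?_⟩
  have hf : f t = next t (fun i => f i) := Nat.strongRec_eq _ t
  rw [hf]
  exact hnext t _

theorem exists_le_disjoint_fiber {α : Type*} (C : Set α) (φ : α → ℕ) {S : Set α}
    (hS : S.Finite) (t : ℕ) : ∃ j, t ≤ j ∧ Disjoint {x ∈ C | φ x = j} S := by
  obtain ⟨j, hj, htj⟩ := (hS.image φ).infinite_compl.exists_gt t
  exact ⟨j, htj.le, disjoint_left.2 fun x hx hxS => hj ⟨x, hxS, hx.2⟩⟩

theorem exists_infinite_index_sets_disjoint {α : Type*} (C : ℕ → Set α) (φ : ℕ → α → ℕ)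
    (hfin : ∀ n j, {x ∈ C n | φ n x = j}.Finite) :
    ∃ J : ℕ → Set ℕ, (∀ n, (J n).Infinite) ∧
      ∀ m n, m ≠ n → Disjoint {x ∈ C m | φ m x ∈ J m} {x ∈ C n | φ n x ∈ J n} := by
  set block : ℕ → ℕ → Set α := fun n j => {x ∈ C n | φ n x = j}
  obtain ⟨k, hk⟩ := exists_seq_of_forall_exists_next
    (fun t g j => t ≤ j ∧
      Disjoint (block (Nat.unpair t).1 j) (⋃ i : Fin t, block (Nat.unpair i).1 (g i)))
    fun t g => exists_le_disjoint_fiber _ _ (finite_iUnion fun _ => hfin _ _) t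
  have hk_disj : ∀ s t, s < t →
      Disjoint (block (Nat.unpair t).1 (k t)) (block (Nat.unpair s).1 (k s)) :=
    fun s t hst => (hk t).2.mono_right (subset_iUnion_of_subset ⟨s, hst⟩ subset_rfl)
  refine ⟨fun n => k '' {t | (Nat.unpair t).1 = n}, fun n => ?_, fun m n hmn => ?_⟩
  · refine infinite_of_forall_exists_gt fun b => ⟨k (Nat.pair n (b + 1)), ?_, ?_⟩
    · exact mem_image_of_mem k (by simp [Nat.unpair_pair])
    · calc b < b + 1 := b.lt_succ_self
        _ ≤ Nat.pair n (b + 1) := Nat.right_le_pair n (b + 1)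
        _ ≤ k (Nat.pair n (b + 1)) := (hk _).1
  · refine disjoint_left.2 ?_
    rintro x ⟨hxm, t, rfl, hkt⟩ ⟨hxn, s, rfl, hks⟩
    have hxt : x ∈ block (Nat.unpair t).1 (k t) := ⟨hxm, hkt.symm⟩
    have hxs : x ∈ block (Nat.unpair s).1 (k s) := ⟨hxn, hks.symm⟩
    rcases Nat.lt_or_gt_of_ne (fun hts : t = s => hmn (by rw [hts])) with hts | hst
    · exact disjoint_left.1 (hk_disj t s hts) hxs hxt
    · exact disjoint_left.1 (hk_disj s t hst) hxt hxs

/-- The new grouping sends `x` to the rank of `φ x` in `J`. -/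
theorem mem_groupables_of_grouping {α : Type*} {ℭ : Set (Set α)} {C : Set α} {φ : α → ℕ}
    (hfin : ∀ n, {x ∈ C | φ x = n}.Finite)
    (hmem : ∀ J : Set ℕ, J.Infinite → {x ∈ C | φ x ∈ J} ∈ ℭ) {J : Set ℕ} (hJ : J.Infinite) :
    {x ∈ C | φ x ∈ J} ∈ groupables ℭ := by
  classical
  have hJ' : (Set.ofPred (· ∈ J)).Infinite := hJ
  refine ⟨hmem J hJ, fun x => Nat.count (· ∈ J) (φ x), fun m => ?_, fun I hI => ?_⟩
  · refine (hfin (Nat.nth (· ∈ J) m)).subset ?_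
    rintro x ⟨⟨hxC, hxJ⟩, rfl⟩
    exact ⟨hxC, (Nat.nth_count hxJ).symm⟩
  · have hregroup : {x ∈ {x ∈ C | φ x ∈ J} | Nat.count (· ∈ J) (φ x) ∈ I} =
        {x ∈ C | φ x ∈ Nat.nth (· ∈ J) '' I} := by
      ext x
      constructor
      · rintro ⟨⟨hxC, hxJ⟩, hxI⟩
        exact ⟨hxC, _, hxI, Nat.nth_count hxJ⟩
      · rintro ⟨hxC, i, hi, hix⟩
        refine ⟨⟨hxC, hix ▸ Nat.nth_mem_of_infinite hJ' i⟩, ?_⟩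
        rw [← hix, Nat.count_nth_of_infinite hJ']
        exact hi
    rw [hregroup]
    exact hmem _ (hI.image (Nat.nth_injective hJ').injOn)

theorem statement1_general {X : Type u} [TopologicalSpace X]
    (𝒜 : Set (Set X))
    (𝒰 : ℕ → Set (Set X)) (h𝒰 : ∀ n, 𝒰 n ∈ groupables (ACovers X 𝒜)) :
    ∃ 𝒱 : ℕ → Set (Set X),
      (∀ n, 𝒱 n ∈ groupables (ACovers X 𝒜) ∧ 𝒱 n ⊆ 𝒰 n) ∧
      (∀ m n, m ≠ n → Disjoint (𝒱 m) (𝒱 n)) := by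
  choose φ hfin hmem using fun n => (h𝒰 n).2
  obtain ⟨J, hJ, hdisj⟩ := exists_infinite_index_sets_disjoint 𝒰 φ hfin
  exact ⟨fun n => {U ∈ 𝒰 n | φ n U ∈ J n},
    fun n => ⟨mem_groupables_of_grouping (hfin n) (hmem n) (hJ n), fun _ hU => hU.1⟩, hdisj⟩

theorem statement1 {X : Type u} [TopologicalSpace X] [T2Space X]
    (𝒜 : Set (Set X)) (h𝒜 : IdealOfClosedSets X 𝒜)
    (𝒰 : ℕ → Set (Set X)) (h𝒰 : ∀ n, 𝒰 n ∈ groupables (ACovers X 𝒜)) :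
    ∃ 𝒱 : ℕ → Set (Set X),
      (∀ n, 𝒱 n ∈ groupables (ACovers X 𝒜) ∧ 𝒱 n ⊆ 𝒰 n) ∧
      (∀ m n, m ≠ n → Disjoint (𝒱 m) (𝒱 n)) :=
  statement1_general 𝒜 𝒰 h𝒰
end

section
/- Let X be a Hausdorff space and 𝒜 an ideal of closed sets of X, and suppose X satisfies S_fin(𝒪_X(𝒜), 𝒪_X(𝒜)^gp). Then for any sequence ⟨𝒰_n : n ∈ ℕ⟩ of 𝒜-covers of X there exists a sequence ⟨ℱ_n : n ∈ ℕ⟩ such that: each ℱ_n is a finite subset of 𝒰_n; the family {ℱ_n : n ∈ ℕ} is pairwise disjoint; and for every A ∈ 𝒜 there is m ∈ ℕ such that for every n ≥ m there exists V ∈ ℱ_n with A ⊆ V. -/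
open Set TopologicalSpace

universe u

/-!
Applying the selection principle to a constant sequence shows that every `A ∈ 𝒜` lies in
infinitely many members of each `𝒜`-cover. Hence the open sets lying in more than `N` members of
each of `𝒰 0, …, 𝒰 N` form an `𝒜`-cover `deepCover 𝒰 N`. Select finite `𝒢 N ⊆ deepCover 𝒰 N` with
groupable union: every `A ∈ 𝒜` lies in a member of the `j`-th group for all large `j`, and for large
`j` the members of the `j`-th group come from `𝒢 N` with large `N` only. At stage `n` pick such a
group with index `j > n`, deep enough that each of its members lies in a member of `𝒰 n` that was
not selected at an earlier stage, and let `ℱ n` consist of these members of `𝒰 n`.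
-/

open Filter Function

section Selection

variable {α : Type*}

def DeeplyInside (𝒰 : ℕ → Set (Set α)) (N : ℕ) (W : Set α) : Prop :=
  ∀ i ≤ N, (N : ℕ∞) < {U ∈ 𝒰 i | W ⊆ U}.encard

theorem DeeplyInside.mono {𝒰 : ℕ → Set (Set α)} {M N : ℕ} {W : Set α}
    (h : DeeplyInside 𝒰 M W) (hNM : N ≤ M) : DeeplyInside 𝒰 N W :=
  fun i hi => lt_of_le_of_lt (by exact_mod_cast hNM) (h i (hi.trans hNM))

theorem exists_pairwise_disjoint_of_forall_exists_disjoint {β : Type*}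
    (P : ℕ → Finset β → Prop) (h : ∀ n (Q : Finset β), ∃ F, Disjoint F Q ∧ P n F) :
    ∃ F : ℕ → Finset β, Pairwise (Disjoint on F) ∧ ∀ n, P n (F n) := by
  classical
  choose f hfQ hfP using h
  let Q : ℕ → Finset β := fun n => Nat.rec ∅ (fun n Q => Q ∪ f n Q) n
  have hQ : Monotone Q := monotone_nat_of_le_succ fun n => Finset.subset_union_left
  refine ⟨fun n => f n (Q n), (pairwise_disjoint_on _).2 fun m n hmn => ?_, fun n => hfP n (Q n)⟩
  exact (hfQ n (Q n)).symm.mono_left (Finset.subset_union_right.trans (hQ hmn))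

theorem exists_finset_disjoint_cover_of_deeplyInside {𝒰 G : ℕ → Set (Set α)}
    (hG : ∀ j, (G j).Finite) (hdeep : ∀ N, ∀ᶠ j in atTop, ∀ W ∈ G j, DeeplyInside 𝒰 N W)
    (n : ℕ) (Q : Finset (Set α)) :
    ∃ F : Finset (Set α), Disjoint F Q ∧ ↑F ⊆ 𝒰 n ∧ ∃ j > n, ∀ W ∈ G j, ∃ V ∈ F, W ⊆ V := by
  classical
  obtain ⟨j, hjW, hnj⟩ := ((hdeep (max n Q.card)).and (eventually_gt_atTop n)).exists
  have hfresh : ∀ W ∈ G j, ∃ V ∈ 𝒰 n, W ⊆ V ∧ V ∉ Q := by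
    intro W hW
    by_contra! hQ
    have hle : {U ∈ 𝒰 n | W ⊆ U}.encard ≤ Q.card := by
      simpa using encard_le_encard fun U (hU : U ∈ {U ∈ 𝒰 n | W ⊆ U}) => hQ U hU.1 hU.2
    exact (hjW W hW n (le_max_left _ _)).not_ge
      (hle.trans (by exact_mod_cast le_max_right _ _))
  choose! V hV using hfresh
  refine ⟨(hG j).toFinset.image V, ?_, ?_, j, hnj, fun W hW => ⟨V W, ?_, (hV W hW).2.1⟩⟩
  · simp only [Finset.disjoint_left, Finset.mem_image, Finite.mem_toFinset]
    rintro _ ⟨W, hW, rfl⟩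
    exact (hV W hW).2.2
  · simp only [Finset.coe_image, Finite.coe_toFinset]
    exact image_subset_iff.2 fun W hW => (hV W hW).1
  · exact Finset.mem_image_of_mem V ((hG j).mem_toFinset.2 hW)

theorem eventually_fiber_subset_iUnion_ge {𝒢 : ℕ → Set α} (h𝒢 : ∀ n, (𝒢 n).Finite)
    (φ : α → ℕ) (N : ℕ) : ∀ᶠ j in atTop, {W ∈ ⋃ n, 𝒢 n | φ W = j} ⊆ ⋃ m ≥ N, 𝒢 m := by
  have hlow : (φ '' ⋃ m < N, 𝒢 m).Finite := ((finite_Iio N).biUnion fun m _ => h𝒢 m).image φ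
  filter_upwards [Nat.cofinite_eq_atTop ▸ hlow.eventually_cofinite_notMem] with j hj
  rintro W ⟨hW, rfl⟩
  obtain ⟨m, hm⟩ := mem_iUnion.1 hW
  exact mem_iUnion₂.2 ⟨m, not_lt.1 fun hmN => hj ⟨W, mem_iUnion₂.2 ⟨m, hmN, hm⟩, rfl⟩, hm⟩

end Selection

section Covers

variable {X : Type u} [TopologicalSpace X] {𝒜 : Set (Set X)}

theorem eventually_exists_superset_of_groupable {C : Set (Set X)} {φ : Set X → ℕ}
    (hφ : ∀ J : Set ℕ, J.Infinite → {W ∈ C | φ W ∈ J} ∈ ACovers X 𝒜) {A : Set X} (hA : A ∈ 𝒜) :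
    ∀ᶠ j in atTop, ∃ W ∈ C, φ W = j ∧ A ⊆ W := by
  rw [← Nat.cofinite_eq_atTop, eventually_cofinite]
  by_contra hbad
  obtain ⟨W, ⟨hWC, hWJ⟩, hAW⟩ := (hφ _ hbad).2 A hA
  exact hWJ ⟨W, hWC, rfl, hAW⟩

theorem infinite_setOf_superset_mem (hS : Sfin (ACovers X 𝒜) (groupables (ACovers X 𝒜)))
    {𝒰 : Set (Set X)} (h𝒰 : 𝒰 ∈ ACovers X 𝒜) {A : Set X} (hA : A ∈ 𝒜) :
    {U ∈ 𝒰 | A ⊆ U}.Infinite := by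
  obtain ⟨ℱ, hℱ, -, φ, -, hφ⟩ := hS (fun _ => 𝒰) (fun _ => h𝒰)
  have hinf : {j | ∃ W ∈ ⋃ n, ℱ n, φ W = j ∧ A ⊆ W}.Infinite :=
    Nat.frequently_atTop_iff_infinite.1 (eventually_exists_superset_of_groupable hφ hA).frequently
  refine Infinite.of_image φ (hinf.mono ?_)
  rintro _ ⟨W, hW, rfl, hAW⟩
  obtain ⟨n, hn⟩ := mem_iUnion.1 hW
  exact ⟨W, ⟨(hℱ n).1 hn, hAW⟩, rfl⟩

def deepCover (𝒰 : ℕ → Set (Set X)) (N : ℕ) : Set (Set X) :=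
  {W | IsOpen W ∧ W.Nonempty ∧ DeeplyInside 𝒰 N W}

theorem deepCover_mem_ACovers (h𝒜 : IdealOfClosedSets X 𝒜)
    (hS : Sfin (ACovers X 𝒜) (groupables (ACovers X 𝒜)))
    {𝒰 : ℕ → Set (Set X)} (h𝒰 : ∀ i, 𝒰 i ∈ ACovers X 𝒜) (N : ℕ) :
    deepCover 𝒰 N ∈ ACovers X 𝒜 := by
  have hsup : ∀ A ∈ 𝒜, ∃ W ∈ deepCover 𝒰 N, A ⊆ W := by
    intro A hA
    have hS' : ∀ i, ∃ S ⊆ {U ∈ 𝒰 i | A ⊆ U}, S.encard = N + 1 := fun i =>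
      exists_subset_encard_eq (by simp [(infinite_setOf_superset_mem hS (h𝒰 i) hA).encard_eq])
    choose S hSsub hScard using hS'
    set T := ⋃ i ∈ Iic N, S i
    have hT : T.Finite := (finite_Iic N).biUnion fun i _ => finite_of_encard_eq_coe (hScard i)
    have hAT : A ⊆ ⋂₀ T := subset_sInter fun U hU => by
      obtain ⟨i, -, hU⟩ := mem_iUnion₂.1 hU
      exact (hSsub i hU).2
    refine ⟨⋂₀ T, ⟨hT.isOpen_sInter fun U hU => ?_, (h𝒜.1 A hA).2.1.mono hAT,
      fun i hi => ?_⟩, hAT⟩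
    · obtain ⟨i, -, hU⟩ := mem_iUnion₂.1 hU
      exact ((h𝒰 i).1.1 U (hSsub i hU).1).1
    · calc (N : ℕ∞) < N + 1 := by exact_mod_cast N.lt_succ_self
        _ = (S i).encard := (hScard i).symm
        _ ≤ {U ∈ 𝒰 i | ⋂₀ T ⊆ U}.encard := encard_le_encard fun U hU =>
          ⟨(hSsub i hU).1, sInter_subset_of_mem (mem_biUnion hi hU)⟩
  refine ⟨⟨fun W hW => ⟨hW.1, hW.2.1, ?_⟩, ?_⟩, hsup⟩
  · obtain ⟨U, hU, hWU⟩ := encard_pos.1 (zero_le.trans_lt (hW.2.2 0 N.zero_le))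
    exact fun hWuniv => ((h𝒰 0).1.1 U hU).2.2 (eq_univ_of_univ_subset (hWuniv ▸ hWU))
  · refine eq_univ_of_forall fun x => ?_
    obtain ⟨W, hW, hxW⟩ := hsup {x} (h𝒜.2.1 _ (finite_singleton x) (singleton_nonempty x))
    exact ⟨W, hW, hxW rfl⟩

end Covers

theorem statement2_general {X : Type u} [TopologicalSpace X]
    (𝒜 : Set (Set X)) (h𝒜 : IdealOfClosedSets X 𝒜)
    (hS : Sfin (ACovers X 𝒜) (groupables (ACovers X 𝒜)))
    (𝒰 : ℕ → Set (Set X)) (h𝒰 : ∀ n, 𝒰 n ∈ ACovers X 𝒜) :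
    ∃ ℱ : ℕ → Set (Set X),
      (∀ n, ℱ n ⊆ 𝒰 n ∧ (ℱ n).Finite) ∧
      (∀ m n, m ≠ n → Disjoint (ℱ m) (ℱ n)) ∧
      (∀ A ∈ 𝒜, ∃ m : ℕ, ∀ n ≥ m, ∃ V ∈ ℱ n, A ⊆ V) := by
  obtain ⟨𝒢, h𝒢, -, φ, hφfin, hφ⟩ := hS (deepCover 𝒰) (deepCover_mem_ACovers h𝒜 hS h𝒰)
  have hdeep : ∀ N, ∀ᶠ j in atTop, ∀ W ∈ {W ∈ ⋃ n, 𝒢 n | φ W = j}, DeeplyInside 𝒰 N W :=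
    fun N => (eventually_fiber_subset_iUnion_ge (fun n => (h𝒢 n).2) φ N).mono fun j hj W hW => by
      obtain ⟨m, hmN, hm⟩ := mem_iUnion₂.1 (hj hW)
      exact ((h𝒢 m).1 hm).2.2.mono hmN
  obtain ⟨F, hFdisj, hF⟩ := exists_pairwise_disjoint_of_forall_exists_disjoint _
    (exists_finset_disjoint_cover_of_deeplyInside hφfin hdeep)
  refine ⟨fun n => F n, fun n => ⟨(hF n).1, (F n).finite_toSet⟩,
    fun m n hmn => Finset.disjoint_coe.2 (hFdisj hmn), fun A hA => ?_⟩
  obtain ⟨M, hM⟩ := eventually_atTop.1 (eventually_exists_superset_of_groupable hφ hA)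
  refine ⟨M, fun n hn => ?_⟩
  obtain ⟨j, hnj, hj⟩ := (hF n).2
  obtain ⟨W, hWC, hφW, hAW⟩ := hM j (hn.trans hnj.le)
  obtain ⟨V, hVF, hWV⟩ := hj W ⟨hWC, hφW⟩
  exact ⟨V, hVF, hAW.trans hWV⟩

theorem statement2 {X : Type u} [TopologicalSpace X] [T2Space X]
    (𝒜 : Set (Set X)) (h𝒜 : IdealOfClosedSets X 𝒜)
    (hS : Sfin (ACovers X 𝒜) (groupables (ACovers X 𝒜)))
    (𝒰 : ℕ → Set (Set X)) (h𝒰 : ∀ n, 𝒰 n ∈ ACovers X 𝒜) :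
    ∃ ℱ : ℕ → Set (Set X),
      (∀ n, ℱ n ⊆ 𝒰 n ∧ (ℱ n).Finite) ∧
      (∀ m n, m ≠ n → Disjoint (ℱ m) (ℱ n)) ∧
      (∀ A ∈ 𝒜, ∃ m : ℕ, ∀ n ≥ m, ∃ V ∈ ℱ n, A ⊆ V) :=
  statement2_general 𝒜 h𝒜 hS 𝒰 h𝒰
end

section
/- Let X be a Hausdorff space, let 𝒜 be an ideal of closed sets of X consisting of compact sets, let 𝔸(X) denote 𝒜 regarded as a subspace of 𝕂(X), and let ℬ be an ideal of closed sets of 𝔸(X) consisting of compact sets. For U open in X write [U] = {K ∈ 𝔸(X) : K ⊆ U}. Assume: (S1) for every K₀ ∈ 𝒜 the set {K ∈ 𝔸(X) : K ⊆ K₀} belongs to ℬ, and for every 𝐊 ∈ ℬ the union ⋃𝐊 belongs to 𝒜; (S2) for every 𝒜-cover 𝒰 of X, {[U] : U ∈ 𝒰} is a ℬ-cover of 𝔸(X); (S3) for every ℬ-cover 𝒰 of 𝔸(X), the family {V : V a nonempty proper open subset of X with [V] ⊆ U for some U ∈ 𝒰} is an 𝒜-cover of X; (S4) if X satisfies S_fin(𝒪_X(𝒜),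 𝒪_X(𝒜)^gp) then X has the Hurewicz property, and if 𝔸(X) satisfies S_fin(𝒪_{𝔸(X)}(ℬ), 𝒪_{𝔸(X)}(ℬ)^gp) then 𝔸(X) has the Hurewicz property; (S5) the following are equivalent: 𝔸(X) is Menger; 𝔸(X) satisfies S_fin(𝒪_{𝔸(X)}(ℬ), 𝒪_{𝔸(X)}(ℬ)); X satisfies S_fin(𝒪_X(𝒜), 𝒪_X(𝒜)). Then the following are equivalent: (i) 𝔸(X) has the Hurewicz property; (ii) 𝔸(X) satisfies S_fin(𝒪_{𝔸(X)}(ℬ), 𝒪_{𝔸(X)}(ℬ)^gp); (iii) X satisfies S_fin(𝒪_X(𝒜), 𝒪_X(𝒜)^gp); (iv) X satisfies S_fin(𝒪_X(𝒜), 𝒪_X(𝒜)) and the groupable 𝒜-covers of X are exactly the countable 𝒜-covers of X. -/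
open Set TopologicalSpace

universe u

/-!
(ii) ⇒ (i) is (S4), and (i) ⇒ Menger ⇒ `S_fin(𝒪_X(𝒜), 𝒪_X(𝒜))` by (S5); what remains is that
countable covers are groupable. An enumerated cover `{U_k}` is groupable as soon as there are
finite sets of indices, drifting off to infinity, such that every `A` eventually lies in some
`U_k` with `k` in the current set: such sets can be thinned out to disjoint consecutive blocks.
For an `𝒜`-cover of `X`, the Hurewicz property of `𝔸(X)` applied to the tails
`{[U_k] : k ≥ n}` provides these sets. For a `ℬ`-cover of `𝔸(X)`, (S3) turns its tails into
`𝒜`-covers of `X`; a groupable selection from them provides the sets, since `⋃𝐊 ∈ 𝒜` for `𝐊 ∈ ℬ`.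
-/

open Filter Function

theorem StrictMono.exists_blockIndex {t : ℕ → ℕ} (ht : StrictMono t) :
    ∃ β : ℕ → ℕ, (∀ s, {k | β k = s}.Finite) ∧
      ∀ s k, t s ≤ k → k < t (s + 1) → β k = s := by
  classical
  have hex : ∀ k, ∃ s, k < t (s + 1) := fun k => ⟨k, (Nat.lt_succ_self k).trans_le (ht.id_le _)⟩
  refine ⟨fun k => Nat.find (hex k), fun s => (finite_Iio (t (s + 1))).subset ?_, ?_⟩
  · rintro k rfl
    exact Nat.find_spec (hex k)
  · intro s k hsk hks
    refine (Nat.find_eq_iff (hex k)).2 ⟨hks, fun s' hs' => not_lt.2 ?_⟩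
    exact (ht.monotone (Nat.succ_le_of_lt hs')).trans hsk

theorem exists_blocks_of_finite_of_tendsto (I : ℕ → Set ℕ) (hfin : ∀ n, (I n).Finite)
    (hlarge : ∀ m, ∀ᶠ n in atTop, ∀ k ∈ I n, m ≤ k) :
    ∃ β : ℕ → ℕ, (∀ s, {k | β k = s}.Finite) ∧
      ∀ P : ℕ → Prop, (∀ᶠ n in atTop, ∃ k ∈ I n, P k) → ∀ᶠ s in atTop, ∃ k, β k = s ∧ P k := by
  choose N hN using fun m => eventually_atTop.1 (hlarge m)
  choose M hM using fun n => (hfin n).bddAbove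
  -- block `s` is `[t s, t (s + 1))`, and it contains `I (max s (N (t s)))`
  let t : ℕ → ℕ := fun s => Nat.rec 0 (fun s ts => max (ts + 1) (M (max s (N ts)) + 1)) s
  have ht : StrictMono t :=
    strictMono_nat_of_lt_succ fun s => lt_max_of_lt_left (Nat.lt_succ_self _)
  have hblock : ∀ s, ∀ k ∈ I (max s (N (t s))), t s ≤ k ∧ k < t (s + 1) := fun s k hk =>
    ⟨hN _ _ (le_max_right _ _) k hk, (Nat.lt_succ_of_le (hM _ hk)).trans_le (le_max_right _ _)⟩
  obtain ⟨β, hβfin, hβ⟩ := ht.exists_blockIndex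
  refine ⟨β, hβfin, fun P hP => ?_⟩
  obtain ⟨n₀, hn₀⟩ := eventually_atTop.1 hP
  refine eventually_atTop.2 ⟨n₀, fun s hs => ?_⟩
  obtain ⟨k, hk, hPk⟩ := hn₀ _ (hs.trans (le_max_left _ _))
  exact ⟨k, hβ s k (hblock s k hk).1 (hblock s k hk).2, hPk⟩

theorem Set.Countable.exists_injective_range_eq {α : Type*} {s : Set α} (hc : s.Countable)
    (hi : s.Infinite) : ∃ e : ℕ → α, Injective e ∧ range e = s := by
  have := hc.to_subtype
  have := hi.to_subtype
  obtain ⟨f⟩ : Nonempty (ℕ ≃ s) := nonempty_equiv_of_countable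
  exact ⟨Subtype.val ∘ f, Subtype.val_injective.comp f.injective,
    by rw [range_comp, f.range_eq_univ, image_univ, Subtype.range_coe]⟩

section SelectionPrinciples

variable {α : Type*} {𝒜 ℬ ℬ' : Set (Set α)}

theorem Sfin.mono (h : Sfin 𝒜 ℬ) (hℬ : ℬ ⊆ ℬ') : Sfin 𝒜 ℬ' := fun 𝒰 h𝒰 =>
  (h 𝒰 h𝒰).imp fun _ hℱ => ⟨hℱ.1, hℬ hℱ.2⟩

theorem Sfin.countable (h : Sfin 𝒜 ℬ) : Sfin 𝒜 {C | C ∈ ℬ ∧ C.Countable} := by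
  intro 𝒰 h𝒰
  obtain ⟨ℱ, hℱ, hmem⟩ := h 𝒰 h𝒰
  exact ⟨ℱ, hℱ, hmem, countable_iUnion fun n => (hℱ n).2.countable⟩

theorem Groupable.countable {C : Set α} (h : Groupable 𝒜 C) : C.Countable := by
  obtain ⟨φ, hfib, -⟩ := h
  refine Countable.mono (fun x hx => ?_) (countable_iUnion fun n => (hfib n).countable)
  exact mem_iUnion.2 ⟨φ x, hx, rfl⟩

theorem groupable_empty (h : ∅ ∈ 𝒜) : Groupable 𝒜 (∅ : Set α) :=
  ⟨fun _ => 0, fun _ => by simp, fun _ _ => by simpa using h⟩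

end SelectionPrinciples

theorem HurewiczProp.mengerProp {Z : Type*} [TopologicalSpace Z] (h : HurewiczProp Z) :
    MengerProp Z := by
  intro 𝒰 h𝒰
  obtain ⟨ℱ, hℱ, hev⟩ := h 𝒰 h𝒰
  refine ⟨ℱ, hℱ, fun U hU => ?_, eq_univ_of_forall fun z => ?_⟩
  · obtain ⟨n, hn⟩ := mem_iUnion.1 hU
    exact (h𝒰 n).1 U ((hℱ n).1 hn)
  · obtain ⟨m, hm⟩ := hev z
    obtain ⟨U, hU, hzU⟩ := mem_sUnion.1 (hm m le_rfl)
    exact mem_sUnion.2 ⟨U, mem_iUnion.2 ⟨m, hU⟩, hzU⟩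

section ACovers

variable {Z : Type*} [TopologicalSpace Z] {𝒞 : Set (Set Z)}

theorem mem_aCovers_of_subset (hsing : ∀ z, {z} ∈ 𝒞) {𝒰 𝒱 : Set (Set Z)}
    (h𝒰 : 𝒰 ∈ ACovers Z 𝒞) (h𝒱𝒰 : 𝒱 ⊆ 𝒰) (h𝒱 : ∀ A ∈ 𝒞, ∃ V ∈ 𝒱, A ⊆ V) :
    𝒱 ∈ ACovers Z 𝒞 := by
  refine ⟨⟨fun V hV => h𝒰.1.1 V (h𝒱𝒰 hV), eq_univ_of_forall fun z => ?_⟩, h𝒱⟩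
  obtain ⟨V, hV, hzV⟩ := h𝒱 {z} (hsing z)
  exact mem_sUnion.2 ⟨V, hV, hzV rfl⟩

theorem sdiff_singleton_mem_aCovers (hsing : ∀ z, {z} ∈ 𝒞)
    (hunion : ∀ A ∈ 𝒞, ∀ B ∈ 𝒞, A ∪ B ∈ 𝒞) {𝒰 : Set (Set Z)} (h𝒰 : 𝒰 ∈ ACovers Z 𝒞)
    (U : Set Z) : 𝒰 \ {U} ∈ ACovers Z 𝒞 := by
  by_cases hU : U ∈ 𝒰
  · refine mem_aCovers_of_subset hsing h𝒰 sdiff_subset fun A hA => ?_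
    -- a member containing `A ∪ {z}` with `z ∉ U` cannot be `U`
    obtain ⟨z, hz⟩ := (ne_univ_iff_exists_notMem U).1 (h𝒰.1.1 U hU).2.2
    obtain ⟨V, hV, hAV⟩ := h𝒰.2 _ (hunion _ hA _ (hsing z))
    exact ⟨V, ⟨hV, by rintro rfl; exact hz (hAV (Or.inr rfl))⟩, subset_union_left.trans hAV⟩
  · rwa [sdiff_singleton_eq_self hU]

theorem sdiff_mem_aCovers (hsing : ∀ z, {z} ∈ 𝒞) (hunion : ∀ A ∈ 𝒞, ∀ B ∈ 𝒞, A ∪ B ∈ 𝒞)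
    {𝒰 𝒮 : Set (Set Z)} (h𝒰 : 𝒰 ∈ ACovers Z 𝒞) (h𝒮 : 𝒮.Finite) : 𝒰 \ 𝒮 ∈ ACovers Z 𝒞 := by
  induction 𝒮, h𝒮 using Set.Finite.induction_on with
  | empty => rwa [sdiff_empty]
  | @insert U 𝒮 _ _ ih =>
    rw [insert_eq, union_comm, ← sdiff_sdiff]
    exact sdiff_singleton_mem_aCovers hsing hunion ih U

theorem infinite_of_mem_aCovers (hsing : ∀ z, {z} ∈ 𝒞) (hunion : ∀ A ∈ 𝒞, ∀ B ∈ 𝒞, A ∪ B ∈ 𝒞)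
    {𝒰 : Set (Set Z)} (h𝒰 : 𝒰 ∈ ACovers Z 𝒞) (hne : 𝒰.Nonempty) : 𝒰.Infinite := by
  intro hfin
  obtain ⟨U, hU⟩ := hne
  obtain ⟨z, -⟩ := (h𝒰.1.1 U hU).2.1
  have hempty := (sdiff_mem_aCovers hsing hunion h𝒰 hfin).1.2
  rw [sdiff_self, sUnion_empty] at hempty
  exact notMem_empty z (hempty ▸ mem_univ z)

theorem image_Ici_mem_aCovers (hsing : ∀ z, {z} ∈ 𝒞) (hunion : ∀ A ∈ 𝒞, ∀ B ∈ 𝒞, A ∪ B ∈ 𝒞)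
    {e : ℕ → Set Z} (he : Injective e) (hcover : range e ∈ ACovers Z 𝒞) (n : ℕ) :
    e '' Ici n ∈ ACovers Z 𝒞 := by
  rw [← compl_Iio, ← range_sdiff_image he]
  exact sdiff_mem_aCovers hsing hunion hcover ((finite_Iio n).image e)

theorem eventually_exists_subset_of_forall_infinite {C : Set (Set Z)} {φ : Set Z → ℕ}
    (h : ∀ J : Set ℕ, J.Infinite → {U ∈ C | φ U ∈ J} ∈ ACovers Z 𝒞) {A : Set Z} (hA : A ∈ 𝒞) :
    ∀ᶠ n in atTop, ∃ U ∈ C, φ U = n ∧ A ⊆ U := by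
  rw [← Nat.cofinite_eq_atTop, eventually_cofinite]
  by_contra hJ
  obtain ⟨U, ⟨hUC, hUJ⟩, hAU⟩ := (h _ hJ).2 A hA
  exact hUJ ⟨U, hUC, rfl, hAU⟩

theorem groupable_of_eventually (hsing : ∀ z, {z} ∈ 𝒞) {G : Set (Set Z)}
    (hG : G ∈ ACovers Z 𝒞) (φ : Set Z → ℕ) (hfib : ∀ n, {U ∈ G | φ U = n}.Finite)
    (h : ∀ A ∈ 𝒞, ∀ᶠ n in atTop, ∃ U ∈ G, φ U = n ∧ A ⊆ U) : Groupable (ACovers Z 𝒞) G := by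
  refine ⟨φ, hfib, fun J hJ => mem_aCovers_of_subset hsing hG (sep_subset _ _) fun A hA => ?_⟩
  obtain ⟨n, hnJ, U, hU, rfl, hAU⟩ :=
    ((Nat.frequently_atTop_iff_infinite.2 hJ).and_eventually (h A hA)).exists
  exact ⟨U, ⟨hU, hnJ⟩, hAU⟩

theorem groupable_range_of_finite_of_tendsto (hsing : ∀ z, {z} ∈ 𝒞) {e : ℕ → Set Z}
    (he : Injective e) (hcover : range e ∈ ACovers Z 𝒞) (I : ℕ → Set ℕ)
    (hfin : ∀ n, (I n).Finite) (hlarge : ∀ m, ∀ᶠ n in atTop, ∀ k ∈ I n, m ≤ k)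
    (h : ∀ A ∈ 𝒞, ∀ᶠ n in atTop, ∃ k ∈ I n, A ⊆ e k) : Groupable (ACovers Z 𝒞) (range e) := by
  obtain ⟨β, hβfin, hβ⟩ := exists_blocks_of_finite_of_tendsto I hfin hlarge
  refine groupable_of_eventually hsing hcover (β ∘ invFun e)
    (fun s => ((hβfin s).image e).subset ?_) fun A hA => ?_
  · rintro _ ⟨⟨k, rfl⟩, hk⟩
    exact ⟨k, by simpa [leftInverse_invFun he k] using hk, rfl⟩
  · filter_upwards [hβ _ (h A hA)] with s ⟨k, hks, hAk⟩
    exact ⟨e k, mem_range_self k, by simp [leftInverse_invFun he k, hks], hAk⟩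

end ACovers

section Hyperspace

variable {X : Type*} {𝒜 : Set (Set X)} {ℬ : Set (Set (Hyper X 𝒜))}

theorem union_mem_of_biUnion_mem (hℬfin : ∀ F : Set (Hyper X 𝒜), F.Finite → F.Nonempty → F ∈ ℬ)
    (hS1b : ∀ Ks ∈ ℬ, (⋃ K ∈ Ks, (K : Hyper X 𝒜).1) ∈ 𝒜) :
    ∀ A ∈ 𝒜, ∀ B ∈ 𝒜, A ∪ B ∈ 𝒜 := by
  intro A hA B hB
  have := hS1b _ (hℬfin {⟨A, hA⟩, ⟨B, hB⟩} (toFinite _) (insert_nonempty _ _))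
  erw [biUnion_pair] at this
  exact this

/-- The paper's `[U]`. -/
def Hyper.upper (𝒜 : Set (Set X)) (U : Set X) : Set (Hyper X 𝒜) := {K | K.1 ⊆ U}

theorem Hyper.upper_injective (hsing : ∀ x, {x} ∈ 𝒜) : Injective (Hyper.upper 𝒜) := by
  intro U V h
  ext x
  have hx : (⟨{x}, hsing x⟩ : Hyper X 𝒜) ∈ Hyper.upper 𝒜 U ↔
      (⟨{x}, hsing x⟩ : Hyper X 𝒜) ∈ Hyper.upper 𝒜 V := by rw [h]
  exact singleton_subset_iff.symm.trans (hx.trans singleton_subset_iff)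

variable [TopologicalSpace X]

theorem Hyper.isOpen_upper {U : Set X} (hU : IsOpen U) : IsOpen (Hyper.upper 𝒜 U) :=
  isOpen_generateFrom_of_mem ⟨U, hU, Or.inl rfl⟩

theorem Hyper.image_upper_mem_OX (hsing : ∀ x, {x} ∈ 𝒜) {𝒰 : Set (Set X)}
    (h𝒰 : 𝒰 ∈ ACovers X 𝒜) : Hyper.upper 𝒜 '' 𝒰 ∈ OX (Hyper X 𝒜) := by
  refine ⟨?_, eq_univ_of_forall fun K => ?_⟩
  · rintro _ ⟨U, hU, rfl⟩
    obtain ⟨hUo, ⟨x, hx⟩, hUne⟩ := h𝒰.1.1 U hU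
    obtain ⟨y, hy⟩ := (ne_univ_iff_exists_notMem U).1 hUne
    refine ⟨isOpen_upper hUo, ⟨⟨{x}, hsing x⟩, singleton_subset_iff.2 hx⟩, fun h => hy ?_⟩
    have hyU : (⟨{y}, hsing y⟩ : Hyper X 𝒜) ∈ Hyper.upper 𝒜 U := h ▸ mem_univ _
    exact hyU rfl
  · obtain ⟨U, hU, hKU⟩ := h𝒰.2 K.1 K.2
    exact ⟨_, mem_image_of_mem _ hU, hKU⟩

theorem union_mem_hyper_of_biUnion_mem (hℬ : IdealOfClosedSets (Hyper X 𝒜) ℬ)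
    (h𝒜 : ∀ A ∈ 𝒜, A ≠ univ) (hsing : ∀ x, {x} ∈ 𝒜)
    (hS1b : ∀ Ks ∈ ℬ, (⋃ K ∈ Ks, (K : Hyper X 𝒜).1) ∈ 𝒜) :
    ∀ B₁ ∈ ℬ, ∀ B₂ ∈ ℬ, B₁ ∪ B₂ ∈ ℬ := by
  intro B₁ h₁ B₂ h₂
  refine hℬ.2.2.1 B₁ B₂ h₁ h₂ fun huniv => h𝒜 _
    (union_mem_of_biUnion_mem hℬ.2.1 hS1b _ (hS1b B₁ h₁) _ (hS1b B₂ h₂))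
    (eq_univ_of_forall fun x => ?_)
  have hx : (⟨{x}, hsing x⟩ : Hyper X 𝒜) ∈ B₁ ∪ B₂ := huniv ▸ mem_univ _
  exact hx.imp (mem_biUnion · (mem_singleton x)) (mem_biUnion · (mem_singleton x))

theorem groupable_of_countable_of_hurewicz (hsing : ∀ x, {x} ∈ 𝒜)
    (hunion : ∀ A ∈ 𝒜, ∀ B ∈ 𝒜, A ∪ B ∈ 𝒜) (hH : HurewiczProp (Hyper X 𝒜))
    {𝒰 : Set (Set X)} (h𝒰 : 𝒰 ∈ ACovers X 𝒜) (hc : 𝒰.Countable) :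
    Groupable (ACovers X 𝒜) 𝒰 := by
  rcases 𝒰.eq_empty_or_nonempty with rfl | hne
  · exact groupable_empty h𝒰
  obtain ⟨e, he, rfl⟩ := hc.exists_injective_range_eq (infinite_of_mem_aCovers hsing hunion h𝒰 hne)
  have hinj : Injective (Hyper.upper 𝒜 ∘ e) := (Hyper.upper_injective hsing).comp he
  obtain ⟨𝒢, h𝒢, hev⟩ := hH (fun n => Hyper.upper 𝒜 '' (e '' Ici n))
    fun n => Hyper.image_upper_mem_OX hsing (image_Ici_mem_aCovers hsing hunion he h𝒰 n)
  refine groupable_range_of_finite_of_tendsto hsing he h𝒰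
    (fun n => {k | n ≤ k ∧ Hyper.upper 𝒜 (e k) ∈ 𝒢 n})
    (fun n => ((h𝒢 n).2.preimage hinj.injOn).subset fun k hk => hk.2)
    (fun m => eventually_atTop.2 ⟨m, fun n hmn k hk => hmn.trans hk.1⟩) fun A hA => ?_
  obtain ⟨m, hm⟩ := hev ⟨A, hA⟩
  refine eventually_atTop.2 ⟨m, fun n hn => ?_⟩
  obtain ⟨S, hS, hAS⟩ := mem_sUnion.1 (hm n hn)
  obtain ⟨_, ⟨k, hk, rfl⟩, rfl⟩ := (h𝒢 n).1 hS
  exact ⟨k, ⟨hk, hS⟩, hAS⟩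

theorem groupable_of_countable_of_sfin (hsing : ∀ K, {K} ∈ ℬ)
    (hunion : ∀ B₁ ∈ ℬ, ∀ B₂ ∈ ℬ, B₁ ∪ B₂ ∈ ℬ)
    (hS1b : ∀ Ks ∈ ℬ, (⋃ K ∈ Ks, (K : Hyper X 𝒜).1) ∈ 𝒜)
    (hS3 : ∀ 𝒰 ∈ ACovers (Hyper X 𝒜) ℬ,
      {V : Set X | IsOpen V ∧ V.Nonempty ∧ V ≠ univ ∧
        ∃ U ∈ 𝒰, Hyper.upper 𝒜 V ⊆ U} ∈ ACovers X 𝒜)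
    (hsel : Sfin (ACovers X 𝒜) (groupables (ACovers X 𝒜)))
    {G : Set (Set (Hyper X 𝒜))} (hG : G ∈ ACovers (Hyper X 𝒜) ℬ) (hc : G.Countable) :
    Groupable (ACovers (Hyper X 𝒜) ℬ) G := by
  rcases G.eq_empty_or_nonempty with rfl | hne
  · exact groupable_empty hG
  obtain ⟨e, he, rfl⟩ := hc.exists_injective_range_eq (infinite_of_mem_aCovers hsing hunion hG hne)
  obtain ⟨ℱ, hℱ, -, φ, hfib, hφ⟩ :=
    hsel _ fun m => hS3 _ (image_Ici_mem_aCovers hsing hunion he hG m)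
  set C := ⋃ m, ℱ m
  -- each `V ∈ C` is chosen from some `ℱ m`, so `[V]` lies in a member `e k` of `G` with `m ≤ k`
  have hκ : ∀ V, ∃ k, V ∈ C → Hyper.upper 𝒜 V ⊆ e k ∧ ∃ m ≤ k, V ∈ ℱ m := by
    intro V
    by_cases hV : V ∈ C
    · obtain ⟨m, hm⟩ := mem_iUnion.1 hV
      obtain ⟨-, -, -, _, ⟨k, hk, rfl⟩, hVk⟩ := (hℱ m).1 hm
      exact ⟨k, fun _ => ⟨hVk, m, hk, hm⟩⟩
    · exact ⟨0, fun h => absurd h hV⟩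
  choose κ hκ using hκ
  refine groupable_range_of_finite_of_tendsto hsing he hG (fun j => κ '' {V ∈ C | φ V = j})
    (fun j => (hfib j).image κ) (fun m => ?_) fun B hB => ?_
  · have hlow : {V ∈ C | κ V < m}.Finite := by
      refine ((finite_Iio m).biUnion fun i _ => (hℱ i).2).subset ?_
      rintro V ⟨hV, hVm⟩
      obtain ⟨-, i, hik, hVi⟩ := hκ V hV
      exact mem_biUnion (hik.trans_lt hVm) hVi
    rw [← Nat.cofinite_eq_atTop]
    filter_upwards [(hlow.image φ).eventually_cofinite_notMem] with j hj
    rintro _ ⟨V, ⟨hV, rfl⟩, rfl⟩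
    exact not_lt.1 fun hVm => hj ⟨V, ⟨hV, hVm⟩, rfl⟩
  · filter_upwards [eventually_exists_subset_of_forall_infinite hφ (hS1b B hB)]
      with j ⟨V, hV, hVj, hBV⟩
    refine ⟨κ V, ⟨V, ⟨hV, hVj⟩, rfl⟩, fun K hK => (hκ V hV).1 ?_⟩
    exact (subset_biUnion_of_mem hK).trans hBV

end Hyperspace

theorem statement3_general {X : Type u} [TopologicalSpace X]
    (𝒜 : Set (Set X)) (h𝒜 : IdealOfClosedSets X 𝒜)
    (ℬ : Set (Set (Hyper X 𝒜))) (hℬ : IdealOfClosedSets (Hyper X 𝒜) ℬ)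
    (hS1b : ∀ Ks ∈ ℬ, (⋃ K ∈ Ks, (K : Hyper X 𝒜).1) ∈ 𝒜)
    (hS3 : ∀ 𝒰 ∈ ACovers (Hyper X 𝒜) ℬ,
      {V : Set X | IsOpen V ∧ V.Nonempty ∧ V ≠ Set.univ ∧
        ∃ U ∈ 𝒰, {K : Hyper X 𝒜 | K.1 ⊆ V} ⊆ U} ∈ ACovers X 𝒜)
    (hS4b : Sfin (ACovers (Hyper X 𝒜) ℬ) (groupables (ACovers (Hyper X 𝒜) ℬ)) →
      HurewiczProp (Hyper X 𝒜))
    (hS5a : MengerProp (Hyper X 𝒜) ↔ Sfin (ACovers (Hyper X 𝒜) ℬ) (ACovers (Hyper X 𝒜) ℬ))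
    (hS5b : Sfin (ACovers (Hyper X 𝒜) ℬ) (ACovers (Hyper X 𝒜) ℬ) ↔
      Sfin (ACovers X 𝒜) (ACovers X 𝒜)) :
    List.TFAE
      [HurewiczProp (Hyper X 𝒜),
       Sfin (ACovers (Hyper X 𝒜) ℬ) (groupables (ACovers (Hyper X 𝒜) ℬ)),
       Sfin (ACovers X 𝒜) (groupables (ACovers X 𝒜)),
       Sfin (ACovers X 𝒜) (ACovers X 𝒜) ∧
         groupables (ACovers X 𝒜) = {𝒰 | 𝒰 ∈ ACovers X 𝒜 ∧ 𝒰.Countable}] := by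
  have hsing𝒜 : ∀ x : X, {x} ∈ 𝒜 := fun x => h𝒜.2.1 _ (finite_singleton x) (singleton_nonempty x)
  have hsingℬ : ∀ K, {K} ∈ ℬ := fun K => hℬ.2.1 _ (finite_singleton K) (singleton_nonempty K)
  have hunion𝒜 := union_mem_of_biUnion_mem hℬ.2.1 hS1b
  have hunionℬ := union_mem_hyper_of_biUnion_mem hℬ (fun A hA => (h𝒜.1 A hA).2.2) hsing𝒜 hS1b
  tfae_have 2 → 1 := hS4b
  tfae_have 1 → 4 := fun h1 =>
    ⟨hS5b.1 (hS5a.1 h1.mengerProp), Subset.antisymm (fun _ h => ⟨h.1, h.2.countable⟩)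
      fun _ h => ⟨h.1, groupable_of_countable_of_hurewicz hsing𝒜 hunion𝒜 h1 h.1 h.2⟩⟩
  tfae_have 4 → 3 := fun ⟨hsel, hgp⟩ => hsel.countable.mono hgp.ge
  tfae_have 3 → 2 := fun h3 =>
    (hS5b.2 (h3.mono fun _ h => h.1)).countable.mono fun _ h =>
      ⟨h.1, groupable_of_countable_of_sfin hsingℬ hunionℬ hS1b hS3 h3 h.1 h.2⟩
  tfae_finish

theorem statement3 {X : Type u} [TopologicalSpace X] [T2Space X]
    (𝒜 : Set (Set X)) (h𝒜 : IdealOfClosedSets X 𝒜) (h𝒜c : ∀ A ∈ 𝒜, IsCompact A)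
    (ℬ : Set (Set (Hyper X 𝒜))) (hℬ : IdealOfClosedSets (Hyper X 𝒜) ℬ)
    (hℬc : ∀ B ∈ ℬ, IsCompact B)
    (hS1a : ∀ K₀ ∈ 𝒜, {K : Hyper X 𝒜 | K.1 ⊆ K₀} ∈ ℬ)
    (hS1b : ∀ Ks ∈ ℬ, (⋃ K ∈ Ks, (K : Hyper X 𝒜).1) ∈ 𝒜)
    (hS2 : ∀ 𝒰 ∈ ACovers X 𝒜,
      ((fun U => {K : Hyper X 𝒜 | K.1 ⊆ U}) '' 𝒰) ∈ ACovers (Hyper X 𝒜) ℬ)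
    (hS3 : ∀ 𝒰 ∈ ACovers (Hyper X 𝒜) ℬ,
      {V : Set X | IsOpen V ∧ V.Nonempty ∧ V ≠ Set.univ ∧
        ∃ U ∈ 𝒰, {K : Hyper X 𝒜 | K.1 ⊆ V} ⊆ U} ∈ ACovers X 𝒜)
    (hS4a : Sfin (ACovers X 𝒜) (groupables (ACovers X 𝒜)) → HurewiczProp X)
    (hS4b : Sfin (ACovers (Hyper X 𝒜) ℬ) (groupables (ACovers (Hyper X 𝒜) ℬ)) →
      HurewiczProp (Hyper X 𝒜))
    (hS5a : MengerProp (Hyper X 𝒜) ↔ Sfin (ACovers (Hyper X 𝒜) ℬ) (ACovers (Hyper X 𝒜) ℬ))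
    (hS5b : Sfin (ACovers (Hyper X 𝒜) ℬ) (ACovers (Hyper X 𝒜) ℬ) ↔
      Sfin (ACovers X 𝒜) (ACovers X 𝒜)) :
    List.TFAE
      [HurewiczProp (Hyper X 𝒜),
       Sfin (ACovers (Hyper X 𝒜) ℬ) (groupables (ACovers (Hyper X 𝒜) ℬ)),
       Sfin (ACovers X 𝒜) (groupables (ACovers X 𝒜)),
       Sfin (ACovers X 𝒜) (ACovers X 𝒜) ∧
         groupables (ACovers X 𝒜) = {𝒰 | 𝒰 ∈ ACovers X 𝒜 ∧ 𝒰.Countable}] :=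
  statement3_general 𝒜 h𝒜 ℬ hℬ hS1b hS3 hS4b hS5a hS5b
end

section
/- Let X be a Hausdorff space, let 𝒜 be an ideal of closed sets of X consisting of compact sets, let 𝔸(X) denote 𝒜 regarded as a subspace of 𝕂(X), let ℬ be an ideal of closed sets of 𝔸(X) consisting of compact sets, and let □ ∈ {1, fin}. For U open in X write [U] = {K ∈ 𝔸(X) : K ⊆ U}. Assume hypotheses (S1)–(S5): (S1) for every K₀ ∈ 𝒜 the set {K ∈ 𝔸(X) : K ⊆ K₀} belongs to ℬ, and for every 𝐊 ∈ ℬ the union ⋃𝐊 belongs to 𝒜; (S2) for every 𝒜-cover 𝒰 of X, {[U] : U ∈ 𝒰} is a ℬ-cover of 𝔸(X); (S3) for every ℬ-cover 𝒰 of 𝔸(X), the family {V : V a nonempty proper open subset of X with [V] ⊆ U for some U ∈ 𝒰} is an 𝒜-cover of X; (S4) if X satisfies S_fin(𝒪_X(𝒜), 𝒪_X(𝒜)^gp) then X has the Hurewicz property, and likewise for 𝔸(X) with ℬ; (S5) 𝔸(X) is Menger iff 𝔸(X) satisfies S_fin(𝒪_{𝔸(X)}(ℬ), 𝒪_{𝔸(X)}(ℬ))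 iff X satisfies S_fin(𝒪_X(𝒜), 𝒪_X(𝒜)). Assume moreover that One has a winning predetermined strategy in G_□(𝒪_X(𝒜), 𝒪_X(𝒜)) if and only if One has a winning strategy in G_□(𝒪_X(𝒜), 𝒪_X(𝒜)). Then One has a winning predetermined strategy in G_□(𝒪_X(𝒜), 𝒪_X(𝒜)^gp) if and only if One has a winning strategy in G_□(𝒪_X(𝒜), 𝒪_X(𝒜)^gp). -/
open Set TopologicalSpace

universe u

/-!
Write `𝒞 = 𝒪_X(𝒜)`. If `S_fin(𝒞, 𝒞^gp)` fails, a witnessing sequence of covers is already a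
winning predetermined strategy for One in the groupable game. If it holds, every countable member
of `𝒞` is groupable: group a selected groupable subcover by its own grouping and spread the
remaining members injectively over `ℕ`; each tail of the new grouping lies between a tail of the
old one and the whole cover, hence is in `𝒞` because a family squeezed between two `𝒜`-covers is
one. Since every play produces a countable set, One then wins the groupable game exactly when he
wins the plain one, and the assumed equivalence for the plain game transfers.
-/

variable {α : Type u} {ℭ 𝒜 ℬ ℬ' : Set (Set α)}

lemma groupables_subset : groupables ℭ ⊆ ℭ := fun _ h => h.1

lemma Groupable.of_subset_of_countable (hℭ : ℭ.OrdConnected) {V R : Set α}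
    (hV : Groupable ℭ V) (hVR : V ⊆ R) (hR : R ∈ ℭ) (hc : R.Countable) : Groupable ℭ R := by
  classical
  obtain ⟨φ, hfib, htail⟩ := hV
  obtain ⟨e, he⟩ := countable_iff_exists_injOn.mp hc
  refine ⟨fun x => if x ∈ V then φ x else e x, fun n => ?_, fun J hJ => ?_⟩
  · have hrest : {x | x ∈ R ∧ x ∉ V ∧ e x = n}.Finite :=
      Subsingleton.finite fun a ⟨haR, _, hae⟩ b ⟨hbR, _, hbe⟩ => he haR hbR (hae.trans hbe.symm)
    refine ((hfib n).union hrest).subset ?_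
    rintro x ⟨hxR, hx⟩
    by_cases hxV : x ∈ V
    · exact Or.inl ⟨hxV, by simpa [hxV] using hx⟩
    · exact Or.inr ⟨hxR, hxV, by simpa [hxV] using hx⟩
  · refine hℭ.out (htail J hJ) hR ⟨?_, fun x hx => hx.1⟩
    rintro x ⟨hxV, hxJ⟩
    exact ⟨hVR hxV, by simpa [hxV] using hxJ⟩

lemma mem_groupables_of_countable (hℭ : ℭ.OrdConnected) (hS : Sfin ℭ (groupables ℭ))
    {R : Set α} (hR : R ∈ ℭ) (hc : R.Countable) : R ∈ groupables ℭ := by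
  obtain ⟨ℱ, hℱ, hgp⟩ := hS (fun _ => R) (fun _ => hR)
  exact ⟨hR, hgp.2.of_subset_of_countable hℭ (iUnion_subset fun n => (hℱ n).1) hR hc⟩

lemma Sone.sfin (h : Sone 𝒜 ℬ) : Sfin 𝒜 ℬ := by
  intro 𝒰 h𝒰
  obtain ⟨f, hf, hrange⟩ := h 𝒰 h𝒰
  refine ⟨fun n => {f n}, fun n => ⟨singleton_subset_iff.mpr (hf n), finite_singleton _⟩, ?_⟩
  rwa [← range_eq_iUnion]

lemma not_oneWinsPreGfin_iff : ¬ OneWinsPreGfin 𝒜 ℬ ↔ Sfin 𝒜 ℬ := by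
  simp only [OneWinsPreGfin, Sfin]
  push Not
  exact forall₂_congr fun _ _ =>
    exists_congr fun _ => and_congr_left' (forall_congr' fun _ => and_comm)

lemma not_oneWinsPreGone_iff : ¬ OneWinsPreGone 𝒜 ℬ ↔ Sone 𝒜 ℬ := by
  simp only [OneWinsPreGone, Sone]
  push Not
  rfl

lemma OneWinsPreGfin.oneWinsGfin (h : OneWinsPreGfin 𝒜 ℬ) : OneWinsGfin 𝒜 ℬ := by
  obtain ⟨σ, hσ, hwin⟩ := h
  exact ⟨fun s => σ s.length, fun _ => hσ _, fun F hF => hwin F fun n => by simpa using hF n⟩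

lemma OneWinsPreGone.oneWinsGone (h : OneWinsPreGone 𝒜 ℬ) : OneWinsGone 𝒜 ℬ := by
  obtain ⟨σ, hσ, hwin⟩ := h
  exact ⟨fun s => σ s.length, fun _ => hσ _, fun f hf => hwin f fun n => by simpa using hf n⟩

lemma OneWinsPreGfin.mono_right (h : OneWinsPreGfin 𝒜 ℬ) (hℬ : ℬ' ⊆ ℬ) :
    OneWinsPreGfin 𝒜 ℬ' := by
  obtain ⟨σ, hσ, hwin⟩ := h
  exact ⟨σ, hσ, fun F hF hmem => hwin F hF (hℬ hmem)⟩

lemma OneWinsPreGone.mono_right (h : OneWinsPreGone 𝒜 ℬ) (hℬ : ℬ' ⊆ ℬ) :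
    OneWinsPreGone 𝒜 ℬ' := by
  obtain ⟨σ, hσ, hwin⟩ := h
  exact ⟨σ, hσ, fun f hf hmem => hwin f hf (hℬ hmem)⟩

lemma OneWinsGfin.of_countable_mem (h : OneWinsGfin 𝒜 ℬ')
    (hℬ : ∀ C ∈ ℬ, C.Countable → C ∈ ℬ') : OneWinsGfin 𝒜 ℬ := by
  obtain ⟨σ, hσ, hwin⟩ := h
  exact ⟨σ, hσ, fun F hF hmem =>
    hwin F hF (hℬ _ hmem (countable_iUnion fun n => (hF n).1.countable))⟩

lemma OneWinsGone.of_countable_mem (h : OneWinsGone 𝒜 ℬ')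
    (hℬ : ∀ C ∈ ℬ, C.Countable → C ∈ ℬ') : OneWinsGone 𝒜 ℬ := by
  obtain ⟨σ, hσ, hwin⟩ := h
  exact ⟨σ, hσ, fun f hf hmem => hwin f hf (hℬ _ hmem (countable_range f))⟩

theorem oneWinsPreGfin_groupables_iff (hℭ : ℭ.OrdConnected)
    (h : OneWinsPreGfin ℭ ℭ ↔ OneWinsGfin ℭ ℭ) :
    OneWinsPreGfin ℭ (groupables ℭ) ↔ OneWinsGfin ℭ (groupables ℭ) := by
  refine ⟨OneWinsPreGfin.oneWinsGfin, fun hwin => ?_⟩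
  by_contra hpre
  have hS : Sfin ℭ (groupables ℭ) := not_oneWinsPreGfin_iff.mp hpre
  have hplain : OneWinsGfin ℭ ℭ :=
    hwin.of_countable_mem fun _ hC hc => mem_groupables_of_countable hℭ hS hC hc
  exact hpre ((h.mpr hplain).mono_right groupables_subset)

theorem oneWinsPreGone_groupables_iff (hℭ : ℭ.OrdConnected)
    (h : OneWinsPreGone ℭ ℭ ↔ OneWinsGone ℭ ℭ) :
    OneWinsPreGone ℭ (groupables ℭ) ↔ OneWinsGone ℭ (groupables ℭ) := by
  refine ⟨OneWinsPreGone.oneWinsGone, fun hwin => ?_⟩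
  by_contra hpre
  have hS : Sone ℭ (groupables ℭ) := not_oneWinsPreGone_iff.mp hpre
  have hplain : OneWinsGone ℭ ℭ :=
    hwin.of_countable_mem fun _ hC hc => mem_groupables_of_countable hℭ hS.sfin hC hc
  exact hpre ((h.mpr hplain).mono_right groupables_subset)

lemma ACovers.ordConnected {X : Type u} [TopologicalSpace X] (𝒜 : Set (Set X)) :
    (ACovers X 𝒜).OrdConnected := by
  refine ⟨fun W hW R hR C ⟨hWC, hCR⟩ => ⟨⟨fun U hU => hR.1.1 U (hCR hU), ?_⟩, fun A hA => ?_⟩⟩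
  · exact eq_univ_of_univ_subset (hW.1.2 ▸ sUnion_mono hWC)
  · obtain ⟨U, hU, hAU⟩ := hW.2 A hA
    exact ⟨U, hWC hU, hAU⟩

theorem statement4_general {X : Type u} [TopologicalSpace X]
    (𝒜 : Set (Set X)) :
    ((OneWinsPreGone (ACovers X 𝒜) (ACovers X 𝒜) ↔ OneWinsGone (ACovers X 𝒜) (ACovers X 𝒜)) →
      (OneWinsPreGone (ACovers X 𝒜) (groupables (ACovers X 𝒜)) ↔
        OneWinsGone (ACovers X 𝒜) (groupables (ACovers X 𝒜)))) ∧
    ((OneWinsPreGfin (ACovers X 𝒜) (ACovers X 𝒜) ↔ OneWinsGfin (ACovers X 𝒜) (ACovers X 𝒜)) →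
      (OneWinsPreGfin (ACovers X 𝒜) (groupables (ACovers X 𝒜)) ↔
        OneWinsGfin (ACovers X 𝒜) (groupables (ACovers X 𝒜)))) :=
  ⟨oneWinsPreGone_groupables_iff (ACovers.ordConnected 𝒜),
    oneWinsPreGfin_groupables_iff (ACovers.ordConnected 𝒜)⟩

theorem statement4 {X : Type u} [TopologicalSpace X] [T2Space X]
    (𝒜 : Set (Set X)) (h𝒜 : IdealOfClosedSets X 𝒜) (h𝒜c : ∀ A ∈ 𝒜, IsCompact A)
    (ℬ : Set (Set (Hyper X 𝒜))) (hℬ : IdealOfClosedSets (Hyper X 𝒜) ℬ)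
    (hℬc : ∀ B ∈ ℬ, IsCompact B)
    (hS1a : ∀ K₀ ∈ 𝒜, {K : Hyper X 𝒜 | K.1 ⊆ K₀} ∈ ℬ)
    (hS1b : ∀ Ks ∈ ℬ, (⋃ K ∈ Ks, (K : Hyper X 𝒜).1) ∈ 𝒜)
    (hS2 : ∀ 𝒰 ∈ ACovers X 𝒜,
      ((fun U => {K : Hyper X 𝒜 | K.1 ⊆ U}) '' 𝒰) ∈ ACovers (Hyper X 𝒜) ℬ)
    (hS3 : ∀ 𝒰 ∈ ACovers (Hyper X 𝒜) ℬ,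
      {V : Set X | IsOpen V ∧ V.Nonempty ∧ V ≠ Set.univ ∧
        ∃ U ∈ 𝒰, {K : Hyper X 𝒜 | K.1 ⊆ V} ⊆ U} ∈ ACovers X 𝒜)
    (hS4a : Sfin (ACovers X 𝒜) (groupables (ACovers X 𝒜)) → HurewiczProp X)
    (hS4b : Sfin (ACovers (Hyper X 𝒜) ℬ) (groupables (ACovers (Hyper X 𝒜) ℬ)) →
      HurewiczProp (Hyper X 𝒜))
    (hS5a : MengerProp (Hyper X 𝒜) ↔ Sfin (ACovers (Hyper X 𝒜) ℬ) (ACovers (Hyper X 𝒜) ℬ))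
    (hS5b : Sfin (ACovers (Hyper X 𝒜) ℬ) (ACovers (Hyper X 𝒜) ℬ) ↔
      Sfin (ACovers X 𝒜) (ACovers X 𝒜)) :
    ((OneWinsPreGone (ACovers X 𝒜) (ACovers X 𝒜) ↔ OneWinsGone (ACovers X 𝒜) (ACovers X 𝒜)) →
      (OneWinsPreGone (ACovers X 𝒜) (groupables (ACovers X 𝒜)) ↔
        OneWinsGone (ACovers X 𝒜) (groupables (ACovers X 𝒜)))) ∧
    ((OneWinsPreGfin (ACovers X 𝒜) (ACovers X 𝒜) ↔ OneWinsGfin (ACovers X 𝒜) (ACovers X 𝒜)) →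
      (OneWinsPreGfin (ACovers X 𝒜) (groupables (ACovers X 𝒜)) ↔
        OneWinsGfin (ACovers X 𝒜) (groupables (ACovers X 𝒜)))) :=
  statement4_general 𝒜
end

section
/- Let X be a non-compact Hausdorff space. If X satisfies S_fin(𝒦_X, 𝒦_X^gp), then X has the Hurewicz property. -/
open Set TopologicalSpace

universe u

/-!
For open covers `𝒰 n`, the nonempty proper open sets `V` that, for every `i ≤ k`, are covered by
finitely many members of `𝒰 i` form a `k`-cover `𝒲 k`: since `X` is not compact, a compact `K` misses
some point `p`, and removing `p` keeps the cover proper. Select finite `𝒢 k ⊆ 𝒲 k` with groupable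
union. Each point lies in a member of almost every group, and only finitely many groups meet
`𝒢 0, …, 𝒢 (i - 1)`, so some group `m i ≥ i` consists of sets from `𝒲 k` with `k ≥ i`; finitely
many members of `𝒰 i` cover that finite group, and these are the Hurewicz selections.
-/

open Filter

theorem exists_finite_subset_sUnion_subset_sUnion {α : Type*} {𝒱 𝒰 : Set (Set α)}
    (h𝒱 : 𝒱.Finite) (h : ∀ V ∈ 𝒱, ∃ F ⊆ 𝒰, F.Finite ∧ V ⊆ ⋃₀ F) :
    ∃ F ⊆ 𝒰, F.Finite ∧ ⋃₀ 𝒱 ⊆ ⋃₀ F := by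
  choose F hF𝒰 hFfin hVF using h
  refine ⟨⋃ V ∈ 𝒱, F V ‹_›, iUnion₂_subset hF𝒰, h𝒱.biUnion' hFfin, ?_⟩
  rintro x ⟨V, hV, hxV⟩
  obtain ⟨U, hU, hxU⟩ := hVF V hV hxV
  exact ⟨U, mem_iUnion₂_of_mem hV hU, hxU⟩

theorem IsCompact.exists_finite_subset_of_mem_OX {X : Type*} [TopologicalSpace X]
    {K : Set X} (hK : IsCompact K) {𝒰 : Set (Set X)} (h𝒰 : 𝒰 ∈ OX X) :
    ∃ F ⊆ 𝒰, F.Finite ∧ K ⊆ ⋃₀ F := by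
  obtain ⟨F, hF𝒰, hFfin, hKF⟩ := hK.elim_finite_subcover_image (c := id)
    (fun U hU => (h𝒰.1 U hU).1) (by simp [← sUnion_eq_biUnion, h𝒰.2])
  exact ⟨F, hF𝒰, hFfin, by simpa [← sUnion_eq_biUnion] using hKF⟩

def finitelyCoveredOpens {X : Type*} [TopologicalSpace X] (𝒰 : ℕ → Set (Set X)) (k : ℕ) :
    Set (Set X) :=
  {V | IsOpen V ∧ V.Nonempty ∧ V ≠ univ ∧ ∀ i ≤ k, ∃ F ⊆ 𝒰 i, F.Finite ∧ V ⊆ ⋃₀ F}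

theorem finitelyCoveredOpens_mem_kCovers {X : Type*} [TopologicalSpace X] [T1Space X]
    (hX : ¬CompactSpace X) {𝒰 : ℕ → Set (Set X)} (h𝒰 : ∀ n, 𝒰 n ∈ OX X) (k : ℕ) :
    finitelyCoveredOpens 𝒰 k ∈ KCovers X := by
  have hk : ∀ K : Set X, IsCompact K → K.Nonempty →
      ∃ V ∈ finitelyCoveredOpens 𝒰 k, K ⊆ V := by
    intro K hK hKne
    obtain ⟨p, hpK⟩ : ∃ p, p ∉ K := by
      by_contra! hK_univ
      exact hX ⟨by simpa [eq_univ_of_forall hK_univ] using hK⟩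
    choose F hF𝒰 hFfin hKF using fun i => hK.exists_finite_subset_of_mem_OX (h𝒰 i)
    have hKV : K ⊆ (⋂ i ∈ Iic k, ⋃₀ F i) \ {p} :=
      subset_sdiff_singleton (subset_iInter₂ fun i _ => hKF i) hpK
    refine ⟨_, ⟨?_, hKne.mono hKV, ?_, fun i hi => ⟨F i, hF𝒰 i, hFfin i, ?_⟩⟩, hKV⟩
    · refine ((finite_Iic k).isOpen_biInter fun i _ => ?_).sdiff (isClosed_singleton (x := p))
      exact isOpen_sUnion fun U hU => ((h𝒰 i).1 U (hF𝒰 i hU)).1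
    · exact fun h => (h ▸ mem_univ p).2 rfl
    · exact sdiff_subset.trans (biInter_subset_of_mem (mem_Iic.mpr hi))
  refine ⟨⟨fun V hV => ⟨hV.1, hV.2.1, hV.2.2.1⟩, eq_univ_of_forall fun x => ?_⟩, hk⟩
  obtain ⟨V, hV, hxV⟩ := hk {x} isCompact_singleton (singleton_nonempty x)
  exact ⟨V, hV, hxV rfl⟩

theorem exists_ge_forall_mem_tail {α : Type*} {𝒢 : ℕ → Set α} (h𝒢 : ∀ k, (𝒢 k).Finite)
    (φ : α → ℕ) (i : ℕ) : ∃ m ≥ i, ∀ V ∈ ⋃ k, 𝒢 k, φ V = m → ∃ k ≥ i, V ∈ 𝒢 k := by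
  obtain ⟨b, hb⟩ := ((finite_lt_nat i).biUnion fun k _ => h𝒢 k).image φ |>.bddAbove
  refine ⟨max i (b + 1), le_max_left _ _, fun V hV hφV => ?_⟩
  obtain ⟨k, hk⟩ := mem_iUnion.mp hV
  refine ⟨k, not_lt.mp fun hki => ?_, hk⟩
  have : φ V ≤ b := hb ⟨V, mem_biUnion hki hk, rfl⟩
  omega

theorem eventually_mem_sUnion_fiber {α : Type*} {C : Set (Set α)} {φ : Set α → ℕ}
    (hφ : ∀ J : Set ℕ, J.Infinite → ⋃₀ {V ∈ C | φ V ∈ J} = univ) (x : α) :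
    ∀ᶠ n in atTop, x ∈ ⋃₀ {V ∈ C | φ V = n} := by
  rw [← Nat.cofinite_eq_atTop, eventually_cofinite]
  by_contra hJ
  obtain ⟨V, ⟨hVC, hVJ⟩, hxV⟩ := (hφ _ hJ).symm ▸ mem_univ x
  exact hVJ ⟨V, ⟨hVC, rfl⟩, hxV⟩

theorem statement6 {X : Type u} [TopologicalSpace X] [T2Space X] (hX : ¬ CompactSpace X)
    (h : Sfin (KCovers X) (groupables (KCovers X))) : HurewiczProp X := by
  intro 𝒰 h𝒰
  obtain ⟨𝒢, h𝒢, -, φ, hφfin, hφJ⟩ :=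
    h _ (finitelyCoveredOpens_mem_kCovers hX h𝒰)
  choose m hm_ge hm_tail using exists_ge_forall_mem_tail (fun k => (h𝒢 k).2) φ
  have hsel : ∀ i, ∃ F ⊆ 𝒰 i, F.Finite ∧
      ⋃₀ {V ∈ ⋃ k, 𝒢 k | φ V = m i} ⊆ ⋃₀ F := fun i =>
    exists_finite_subset_sUnion_subset_sUnion (hφfin (m i)) fun V ⟨hVC, hφV⟩ => by
      obtain ⟨k, hik, hVk⟩ := hm_tail i V hVC hφV
      exact ((h𝒢 k).1 hVk).2.2.2 i hik
  choose ℱ hℱ𝒰 hℱfin hℱ using hsel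
  refine ⟨ℱ, fun i => ⟨hℱ𝒰 i, hℱfin i⟩, fun x => eventually_atTop.mp ?_⟩
  have hm : Tendsto m atTop atTop := tendsto_atTop_mono hm_ge tendsto_id
  filter_upwards [hm.eventually (eventually_mem_sUnion_fiber (fun J hJ => (hφJ J hJ).1.2) x)]
    with i hi using hℱ i hi
end

section
/- The real line ℝ satisfies S_1(𝒦_ℝ, 𝒦_ℝ^gp): for every sequence ⟨𝒰_n : n ∈ ℕ⟩ of k-covers of ℝ there exist U_n ∈ 𝒰_n such that {U_n : n ∈ ℕ} is a groupable k-cover of ℝ. -/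
open Set TopologicalSpace

universe u

/-!
In a hemicompact space, such as `ℝ` with the compact sets `[-n, n]`, choose from the `n`-th
k-cover a set containing the `n`-th compact set of an exhaustion. Any infinite subfamily of the
selected sets contains sets swallowing arbitrarily late (hence arbitrarily large) compact sets of
the exhaustion, so it is again a k-cover. A countable family all of whose infinite subfamilies
are k-covers is groupable: enumerate it and let every group be a single set.
-/

lemma groupable_of_forall_infinite_subset {α : Type u} {ℭ : Set (Set α)} {C : Set α}
    (hC : C.Countable) (hCinf : C.Infinite) (h : ∀ D ⊆ C, D.Infinite → D ∈ ℭ) :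
    Groupable ℭ C := by
  classical
  have : Countable C := hC.to_subtype
  have : Infinite C := hCinf.to_subtype
  obtain ⟨_⟩ := nonempty_denumerable C
  let e := Denumerable.eqv C
  let φ : α → ℕ := fun x => if hx : x ∈ C then e ⟨x, hx⟩ else 0
  have hφ : ∀ x (hx : x ∈ C), φ x = e ⟨x, hx⟩ := fun x hx => dif_pos hx
  refine ⟨φ, fun n => (finite_singleton (e.symm n : α)).subset ?_, fun J hJ => ?_⟩
  · rintro x ⟨hx, rfl⟩
    simp [hφ x hx]
  · have hset : {x ∈ C | φ x ∈ J} = Subtype.val '' (e.symm '' J) := by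
      ext x
      constructor
      · rintro ⟨hx, hxJ⟩
        exact ⟨⟨x, hx⟩, ⟨φ x, hxJ, by simp [hφ x hx]⟩, rfl⟩
      · rintro ⟨_, ⟨n, hn, rfl⟩, rfl⟩
        exact ⟨Subtype.prop _, by simpa [hφ _ (Subtype.prop _)] using hn⟩
    refine h _ (sep_subset C _) ?_
    rw [hset]
    exact (hJ.image e.symm.injective.injOn).image Subtype.val_injective.injOn

section KCovers

variable {X : Type u} [TopologicalSpace X] {𝒰 : Set (Set X)}

lemma mem_kCovers_of_forall_isCompact (hnt : ∀ U ∈ 𝒰, IsOpen U ∧ U.Nonempty ∧ U ≠ univ)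
    (hk : ∀ L : Set X, IsCompact L → L.Nonempty → ∃ U ∈ 𝒰, L ⊆ U) : 𝒰 ∈ KCovers X := by
  refine ⟨⟨hnt, eq_univ_of_forall fun x => ?_⟩, hk⟩
  obtain ⟨U, hU, hxU⟩ := hk {x} isCompact_singleton (singleton_nonempty x)
  exact ⟨U, hU, hxU rfl⟩

variable [Nonempty X]

lemma exists_superset_of_mem_kCovers (h𝒰 : 𝒰 ∈ KCovers X) {L : Set X} (hL : IsCompact L) :
    ∃ U ∈ 𝒰, L ⊆ U := by
  rcases L.eq_empty_or_nonempty with rfl | hLne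
  · obtain ⟨U, hU, -⟩ := h𝒰.1.2.symm ▸ mem_univ (Classical.arbitrary X)
    exact ⟨U, hU, empty_subset U⟩
  · exact h𝒰.2 L hL hLne

lemma infinite_of_mem_kCovers (h𝒰 : 𝒰 ∈ KCovers X) : 𝒰.Infinite := by
  intro hfin
  have hmiss : ∀ U ∈ 𝒰, ∃ x, x ∉ U := fun U hU =>
    nonempty_compl.mpr ((h𝒰.1.1 U hU).2.2)
  choose! p hp using hmiss
  obtain ⟨U, hU, hPU⟩ := exists_superset_of_mem_kCovers h𝒰 (hfin.image p).isCompact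
  exact hp U hU (hPU (mem_image_of_mem p hU))

end KCovers

namespace CompactExhaustion

variable {X : Type u} [TopologicalSpace X] (K : CompactExhaustion X)

lemma mem_kCovers_of_subset_range {f : ℕ → Set X}
    (hnt : ∀ n, IsOpen (f n) ∧ (f n).Nonempty ∧ f n ≠ univ) (hKf : ∀ n, K n ⊆ f n)
    {D : Set (Set X)} (hD : D ⊆ range f) (hDinf : D.Infinite) : D ∈ KCovers X := by
  refine mem_kCovers_of_forall_isCompact (fun U hU => ?_) fun L hL _ => ?_
  · obtain ⟨n, rfl⟩ := hD hU
    exact hnt n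
  · obtain ⟨m, hLm⟩ := K.exists_superset_of_isCompact hL
    obtain ⟨U, hUD, hU⟩ := (hDinf.sdiff ((finite_Iio m).image f)).nonempty
    obtain ⟨n, rfl⟩ := hD hUD
    have hmn : m ≤ n := not_lt.mp fun hnm => hU (mem_image_of_mem f hnm)
    exact ⟨f n, hUD, hLm.trans ((K.subset hmn).trans (hKf n))⟩

end CompactExhaustion

theorem sone_kCovers_groupables {X : Type u} [TopologicalSpace X] [WeaklyLocallyCompactSpace X]
    [SigmaCompactSpace X] [Nonempty X] : Sone (KCovers X) (groupables (KCovers X)) := by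
  intro 𝒰 h𝒰
  let K := CompactExhaustion.choice X
  choose f hf𝒰 hKf using fun n => exists_superset_of_mem_kCovers (h𝒰 n) (K.isCompact n)
  have hnt : ∀ n, IsOpen (f n) ∧ (f n).Nonempty ∧ f n ≠ univ := fun n =>
    (h𝒰 n).1.1 (f n) (hf𝒰 n)
  have hrange : range f ∈ KCovers X := by
    refine mem_kCovers_of_forall_isCompact (forall_mem_range.mpr hnt) fun L hL _ => ?_
    obtain ⟨m, hLm⟩ := K.exists_superset_of_isCompact hL
    exact ⟨f m, mem_range_self m, hLm.trans (hKf m)⟩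
  exact ⟨f, hf𝒰, hrange, groupable_of_forall_infinite_subset (countable_range f)
    (infinite_of_mem_kCovers hrange) fun _ hD hDinf =>
      K.mem_kCovers_of_subset_range hnt hKf hD hDinf⟩

theorem statement8 : Sone (KCovers ℝ) (groupables (KCovers ℝ)) :=
  sone_kCovers_groupables
end
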